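/- Let d = 2 and let M be the 4×4 {0,1}-matrix [[1,1,1,0],[1,0,0,0],[0,0,1,1],[0,0,1,1]] (the block matrix [[G, R],[O, E_2]] with G = [[1,1],[1,0]], R = [[1,0],[0,0]], and E_2 the 2×2 all-ones matrix). Then h(T_M) > log 2. -/

import Mathlib

open Filter Real

/-- `treeP d M n i` = number of `n`-blocks of the hom Markov tree-shift `T_M`
on the `d`-tree whose root label is `i`. -/
def treeP (d : ℕ) {ι : Type} [Fintype ι] (M : Matrix ι ι ℕ) : ℕ → ι → ℕ
  | 0, _ => 1
  | n + 1, i => (∑ j, M i j * treeP d M n j) ^ d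

/-- `|Δ_n| = 1 + d + ⋯ + d^n`. -/
def deltaCard (d n : ℕ) : ℕ := ∑ i ∈ Finset.range (n + 1), d ^ i

/-- Topological entropy of the hom Markov tree-shift `T_M` on the `d`-tree. -/
noncomputable def treeEntropy (d : ℕ) {ι : Type} [Fintype ι] (M : Matrix ι ι ℕ) : ℝ :=
  Filter.limsup (fun n => Real.log (∑ i, treeP d M n i) / (deltaCard d n : ℝ)) Filter.atTop

/-- `M` has entries in `{0,1}`. -/
def IsBinary {ι : Type} [Fintype ι] (M : Matrix ι ι ℕ) : Prop := ∀ i j, M i j ≤ 1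

/-- `M` is irreducible. -/
def MatIrreducible {ι : Type} [Fintype ι] [DecidableEq ι] (M : Matrix ι ι ℕ) : Prop :=
  ∀ i j, ∃ n, 1 ≤ n ∧ 0 < (M ^ n) i j

/-- `M` is the block matrix `[[E_a, R],[O, E_b]]` with `R` binary of constant row sum `l`. -/
def IsMabl (a b l : ℕ) (M : Matrix (Fin (a + b)) (Fin (a + b)) ℕ) : Prop :=
  (∀ i j, M i j ≤ 1) ∧
  (∀ i j : Fin (a + b), (i : ℕ) < a → (j : ℕ) < a → M i j = 1) ∧
  (∀ i j : Fin (a + b), a ≤ (i : ℕ) → a ≤ (j : ℕ) → M i j = 1) ∧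
  (∀ i j : Fin (a + b), a ≤ (i : ℕ) → (j : ℕ) < a → M i j = 0) ∧
  (∀ i : Fin (a + b), (i : ℕ) < a → (∑ j : Fin (a + b), if a ≤ (j : ℕ) then M i j else 0) = l)


/-!
Let `f n` count the `n`-blocks with root label `0`. Label `0` may be followed by `0, 1, 2` and
label `1` only by `0`, so `f (n + 2) ≥ (f (n + 1) + f n ^ 2) ^ 2`. Since `|Δ (n+1)| = 2 |Δ n| + 1`,
a bound `f n ≥ c ^ |Δ n|` propagates through this recurrence as soon as `c ^ 3 ≤ (c + 1) ^ 2`;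
`c = 21/10` satisfies this and the bound holds at `n = 2, 3`. Hence the entropy is at least
`log (21/10) > log 2`; the limsup is a genuine one because `p_M(n) ≤ 4 ^ |Δ n|`.
-/

lemma deltaCard_succ (d n : ℕ) : deltaCard d (n + 1) = 1 + d * deltaCard d n := by
  simp only [deltaCard, Finset.sum_range_succ' _ (n + 1), Finset.mul_sum, pow_succ']
  ring

lemma one_le_deltaCard (d n : ℕ) : 1 ≤ deltaCard d n :=
  Finset.single_le_sum (f := (d ^ ·)) (fun _ _ => Nat.zero_le _)
    (Finset.mem_range.2 n.succ_pos)

lemma treeP_succ (d : ℕ) {ι : Type} [Fintype ι] (M : Matrix ι ι ℕ) (n : ℕ) (i : ι) :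
    treeP d M (n + 1) i = (∑ j, M i j * treeP d M n j) ^ d := rfl

section Entropy

variable {d : ℕ} {ι : Type} [Fintype ι] {M : Matrix ι ι ℕ}

lemma sum_treeP_le_card_pow (hM : IsBinary M) (n : ℕ) :
    ∑ i, treeP d M n i ≤ Fintype.card ι ^ deltaCard d n := by
  induction n with
  | zero => simp [treeP, deltaCard]
  | succ n ih =>
    have hrow (i : ι) : ∑ j, M i j * treeP d M n j ≤ ∑ j, treeP d M n j :=
      Finset.sum_le_sum fun j _ => by simpa using Nat.mul_le_mul_right (treeP d M n j) (hM i j)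
    calc ∑ i, treeP d M (n + 1) i
        ≤ ∑ _i : ι, (∑ j, treeP d M n j) ^ d :=
          Finset.sum_le_sum fun i _ => Nat.pow_le_pow_left (hrow i) d
      _ = Fintype.card ι * (∑ j, treeP d M n j) ^ d := by simp
      _ ≤ Fintype.card ι * (Fintype.card ι ^ deltaCard d n) ^ d := by gcongr
      _ = Fintype.card ι ^ deltaCard d (n + 1) := by rw [deltaCard_succ]; ring

lemma log_sum_treeP_div_deltaCard_le (hM : IsBinary M) (n : ℕ) :
    Real.log (∑ i, treeP d M n i) / deltaCard d n ≤ Real.log (Fintype.card ι) := by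
  have hΔ : (0 : ℝ) < deltaCard d n := by exact_mod_cast one_le_deltaCard d n
  rw [div_le_iff₀ hΔ, mul_comm, ← Real.log_pow, ← Nat.cast_sum]
  rcases Nat.eq_zero_or_pos (∑ i, treeP d M n i) with h | h
  · simpa [h] using Real.log_natCast_nonneg (Fintype.card ι ^ deltaCard d n)
  · exact Real.log_le_log (by exact_mod_cast h) (by exact_mod_cast sum_treeP_le_card_pow hM n)

lemma log_le_treeEntropy (hM : IsBinary M) {c : ℝ} (hc : 0 < c)
    (hlow : ∀ᶠ n in atTop, c ^ deltaCard d n ≤ ∑ i, (treeP d M n i : ℝ)) :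
    Real.log c ≤ treeEntropy d M := by
  refine le_limsup_of_frequently_le (hlow.mono fun n hn => ?_).frequently
    (isBoundedUnder_of ⟨_, log_sum_treeP_div_deltaCard_le hM⟩)
  have hΔ : (0 : ℝ) < deltaCard d n := by exact_mod_cast one_le_deltaCard d n
  rw [le_div_iff₀ hΔ, mul_comm, ← Real.log_pow]
  exact Real.log_le_log (by positivity) hn

end Entropy

theorem pow_le_of_sq_add_sq_le {a : ℕ → ℝ} {e : ℕ → ℕ} {c : ℝ} (hc : 0 ≤ c)
    (hc3 : c ^ 3 ≤ (c + 1) ^ 2) (he : ∀ n, e (n + 1) = 1 + 2 * e n)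
    (ha : ∀ n, (a (n + 1) + a n ^ 2) ^ 2 ≤ a (n + 2))
    (h0 : c ^ e 0 ≤ a 0) (h1 : c ^ e 1 ≤ a 1) (n : ℕ) : c ^ e n ≤ a n := by
  suffices ∀ n, c ^ e n ≤ a n ∧ c ^ e (n + 1) ≤ a (n + 1) from (this n).1
  intro n
  induction n with
  | zero => exact ⟨h0, h1⟩
  | succ n ih =>
    obtain ⟨hn, hn1⟩ := ih
    refine ⟨hn1, ?_⟩
    set X := c ^ e n
    have hX : 0 ≤ X := by positivity
    have hcX : c * X ^ 2 ≤ a (n + 1) := by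
      rw [he] at hn1; convert hn1 using 1; ring
    calc c ^ e (n + 2) = c ^ 3 * X ^ 4 := by rw [he, he]; ring
      _ ≤ (c + 1) ^ 2 * X ^ 4 := by gcongr
      _ = (c * X ^ 2 + X ^ 2) ^ 2 := by ring
      _ ≤ (a (n + 1) + a n ^ 2) ^ 2 := by gcongr
      _ ≤ a (n + 2) := ha n

abbrev gre : Matrix (Fin 4) (Fin 4) ℕ := !![1, 1, 1, 0; 1, 0, 0, 0; 0, 0, 1, 1; 0, 0, 1, 1]

lemma isBinary_gre : IsBinary gre := by
  intro i j; fin_cases i <;> fin_cases j <;> decide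

lemma treeP_gre_zero_succ (n : ℕ) :
    treeP 2 gre (n + 1) 0 = (treeP 2 gre n 0 + treeP 2 gre n 1 + treeP 2 gre n 2) ^ 2 := by
  simp [treeP_succ, Fin.sum_univ_four]

lemma treeP_gre_one_succ (n : ℕ) : treeP 2 gre (n + 1) 1 = treeP 2 gre n 0 ^ 2 := by
  simp [treeP_succ, Fin.sum_univ_four]

lemma sq_add_sq_le_treeP_gre (n : ℕ) :
    (treeP 2 gre (n + 1) 0 + treeP 2 gre n 0 ^ 2) ^ 2 ≤ treeP 2 gre (n + 2) 0 := by
  rw [treeP_gre_zero_succ (n + 1), ← treeP_gre_one_succ n]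
  exact Nat.pow_le_pow_left (Nat.le_add_right _ _) 2

lemma pow_deltaCard_le_treeP_gre (n : ℕ) :
    (21 / 10 : ℝ) ^ deltaCard 2 (n + 2) ≤ treeP 2 gre (n + 2) 0 := by
  refine pow_le_of_sq_add_sq_le (a := fun n => (treeP 2 gre (n + 2) 0 : ℝ))
    (e := fun n => deltaCard 2 (n + 2)) (by norm_num) (by norm_num)
    (fun n => deltaCard_succ 2 (n + 2)) (fun n => by exact_mod_cast sq_add_sq_le_treeP_gre (n + 2))
    ?_ ?_ n
  · have : treeP 2 gre 2 0 = 196 := by decide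
    norm_num [this, deltaCard, Finset.sum_range_succ]
  · have : treeP 2 gre 3 0 = 116281 := by decide
    norm_num [this, deltaCard, Finset.sum_range_succ]

/-- **Proposition 6.1 (first part).** For `d = 2` and the block matrix
`[[G, R],[O, E₂]]` with `G = [[1,1],[1,0]]` and `R = [[1,0],[0,0]]`,
the entropy exceeds `log 2`. -/
theorem treeEntropy_GRE_gt_log_two :
    treeEntropy 2 (!![1, 1, 1, 0; 1, 0, 0, 0; 0, 0, 1, 1; 0, 0, 1, 1] :
      Matrix (Fin 4) (Fin 4) ℕ) > Real.log 2 := by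
  have hlow : ∀ᶠ n in atTop, (21 / 10 : ℝ) ^ deltaCard 2 n ≤ ∑ i, (treeP 2 gre n i : ℝ) := by
    filter_upwards [eventually_ge_atTop 2] with n hn
    obtain ⟨m, rfl⟩ := Nat.exists_eq_add_of_le' hn
    exact (pow_deltaCard_le_treeP_gre m).trans
      (Finset.single_le_sum (fun i _ => Nat.cast_nonneg _) (Finset.mem_univ 0))
  calc Real.log 2 < Real.log (21 / 10) := Real.log_lt_log (by norm_num) (by norm_num)
    _ ≤ treeEntropy 2 gre := log_le_treeEntropy isBinary_gre (by norm_num) hlow
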